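/- The seller's revenue under network VCG is at most the seller's revenue under IDM: Rev^{VCG} = Σ_{i ∈ C_m\{m,1}} (v*_{-d_i} − v*) + v*_{-d_1} ≤ v*_{-d_1} = Rev^{IDM}, where v* = v*_{N_{-s}} is the overall highest bid and C_m = {1,...,m} is the highest bidder's diffusion critical sequence, since v*_{-d_i} ≤ v* for every i. -/

import Mathlib

/-- The highest reported valuation among the buyers in `B` (zero if `B` is empty). -/
noncomputable def maxBid {N : Type} (v : N → ℝ) (B : Finset N) : ℝ :=
  B.fold max 0 v

theorem maxBid_mono {N : Type} (v : N → ℝ) {B C : Finset N} (hBC : B ⊆ C) :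
    maxBid v B ≤ maxBid v C :=
  (Finset.fold_max_le _).mpr
    ⟨(Finset.le_fold_max _).mpr (Or.inl le_rfl),
      fun x hx => (Finset.le_fold_max _).mpr (Or.inr ⟨x, hBC hx, le_rfl⟩)⟩

theorem sum_range_sub_add_le_of_le {α : Type*} [AddCommGroup α] [PartialOrder α]
    [IsOrderedAddMonoid α] {f : ℕ → α} {M : α} (hf : ∀ i, f i ≤ M) (n : ℕ) :
    ∑ i ∈ Finset.range n, (f i - M) + f n ≤ f 0 := by
  induction n with
  | zero => simp
  | succ n ih =>
    calc ∑ i ∈ Finset.range (n + 1), (f i - M) + f (n + 1)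
        = (∑ i ∈ Finset.range n, (f i - M) + f n) + (f (n + 1) - M) := by
          rw [Finset.sum_range_succ]; abel
      _ ≤ f 0 + 0 := add_le_add ih (sub_nonpos.mpr (hf _))
      _ = f 0 := add_zero _

theorem vcg_revenue_le_idm_revenue_general {N : Type} [DecidableEq N]
    (v : N → ℝ)
    (I : Finset N)                     -- informed participating buyers N_{−s}
    (d : N → Finset N)
    (n : ℕ) (c : ℕ → N) :              -- C_m = c 0, …, c n with c n = m
    (∑ i ∈ Finset.range n, (maxBid v (I \ d (c i)) - maxBid v I))
        + maxBid v (I \ d (c n))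
      ≤ maxBid v (I \ d (c 0)) :=
  sum_range_sub_add_le_of_le (fun _ => maxBid_mono v Finset.sdiff_subset) n

/-- the seller's revenue under network VCG is at most her revenue under
IDM.  Enumerate the highest bidder `m`'s diffusion critical sequence `C_m` as
`c 0, c 1, …, c n` (ordered by `d_{c 0} ⊃ ⋯ ⊃ d_{c n}`, `c n = m`, `c 0` = "buyer 1").
Network VCG collects `v*_{−d_{c i}} − v*` from each `c i` with `i < n` (where
`v* = v*_{N_{−s}}` is the overall highest bid over the informed buyers `I`) and
`v*_{−d_{c n}}` from `m`, while IDM's revenue is `v*_{−d_{c 0}}`; since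
`v*_{−d_{c i}} ≤ v*` for every `i`, the VCG revenue is at most the IDM revenue. -/
theorem vcg_revenue_le_idm_revenue {N : Type} [DecidableEq N]
    (v : N → ℝ) (hv : ∀ j, 0 ≤ v j)
    (I : Finset N)                     -- informed participating buyers N_{−s}
    (d : N → Finset N) (hd : ∀ j, d j ⊆ I)
    (n : ℕ) (c : ℕ → N) :              -- C_m = c 0, …, c n with c n = m
    (∑ i ∈ Finset.range n, (maxBid v (I \ d (c i)) - maxBid v I))
        + maxBid v (I \ d (c n))
      ≤ maxBid v (I \ d (c 0)) :=
  vcg_revenue_le_idm_revenue_general v I d n c
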